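/- arXiv:2405.06582 — 4 statements merged into one kernel-verified Lean document; each statement's English description precedes it below -/
import Mathlib

section
/- For any x in the support of P*, the Bayes optimal classifier f on the mixture P_α = αP* + (1−α)P₀ satisfies f(x) = y* whenever α > (1−α)·Δ_x·P₀(x)/P*(x), where Δ_x = max_{y∈Y}(P₀(y|x) − P₀(y*|x)) and P* assigns label y* deterministically. -/
open Finset

/-- pointwise criterion for the Bayes optimal classifier on the mixture
`P_α = α P* + (1-α) P₀` to output the target label `y*`. -/
theorem stmt7 {X Y : Type*} [Fintype X] [Fintype Y] [Nonempty Y]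
    (P0 Pstar : X × Y → ℝ) (α : ℝ) (ystar : Y) (f : X → Y)
    (hP0 : ∀ z, 0 ≤ P0 z) (hP0sum : ∑ z, P0 z = 1)
    (hPstar : ∀ z, 0 ≤ Pstar z) (hPstarsum : ∑ z, Pstar z = 1)
    (hα : 0 < α) (hα1 : α < 1)
    -- P* places all conditional label mass on ystar:
    (hdet : ∀ x y, y ≠ ystar → Pstar (x, y) = 0)
    -- f is Bayes optimal on P_α = α P* + (1-α) P₀:
    (hBayes : ∀ x y, α * Pstar (x, y) + (1 - α) * P0 (x, y)
        ≤ α * Pstar (x, f x) + (1 - α) * P0 (x, f x)) :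
    ∀ x, 0 < (∑ y, Pstar (x, y)) →
      α > (1 - α) *
          (Finset.univ.sup' Finset.univ_nonempty (fun y : Y =>
            P0 (x, y) / (∑ y', P0 (x, y')) - P0 (x, ystar) / (∑ y', P0 (x, y')))) *
          (∑ y, P0 (x, y)) / (∑ y, Pstar (x, y)) →
      f x = ystar := by
  intro x hsP hgt
  by_contra hne
  set sP := ∑ y, Pstar (x, y) with hsPdef
  set s0 := ∑ y, P0 (x, y) with hs0def
  set Δ := Finset.univ.sup' Finset.univ_nonempty (fun y : Y =>
      P0 (x, y) / s0 - P0 (x, ystar) / s0) with hΔdef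
  have hstar_eq : Pstar (x, ystar) = sP := by
    rw [hsPdef]
    exact (Finset.sum_eq_single ystar (fun y _ hy => hdet x y hy)
      (fun h => absurd (Finset.mem_univ _) h)).symm
  have hfx0 : Pstar (x, f x) = 0 := hdet x (f x) hne
  have hB := hBayes x ystar
  rw [hfx0, hstar_eq] at hB
  have key : α * sP ≤ (1 - α) * (P0 (x, f x) - P0 (x, ystar)) := by nlinarith
  have hs0nonneg : 0 ≤ s0 := Finset.sum_nonneg fun y _ => hP0 _
  rcases eq_or_lt_of_le hs0nonneg with h0 | h0
  · have hall : ∀ y, P0 (x, y) = 0 := by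
      intro y
      exact (Finset.sum_eq_zero_iff_of_nonneg (fun y _ => hP0 (x, y))).mp h0.symm y
        (Finset.mem_univ y)
    rw [hall, hall] at key
    nlinarith
  · have hΔle : P0 (x, f x) / s0 - P0 (x, ystar) / s0 ≤ Δ :=
      Finset.le_sup' (fun y : Y => P0 (x, y) / s0 - P0 (x, ystar) / s0) (Finset.mem_univ (f x))
    have hdiff : P0 (x, f x) - P0 (x, ystar) ≤ Δ * s0 := by
      have := mul_le_mul_of_nonneg_right hΔle (le_of_lt h0)
      rw [sub_mul, div_mul_cancel₀ _ (ne_of_gt h0), div_mul_cancel₀ _ (ne_of_gt h0)] at this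
      linarith
    have hlt : (1 - α) * Δ * s0 < α * sP := (div_lt_iff₀ hsP).mp hgt
    nlinarith
end

section
/- Under the feature-label strategy with a Bayes optimal classifier f on P_α = αP* + (1−α)P₀, the success S(α) = Pr_{x∼P*}[f(x)=y*] satisfies S(α) ≥ 1 − ((1−α)/α) · E_{x∼P*}[Δ_x · P₀(x)/P*(x)] ≥ 1 − ((1−α)/α) · Δ · ξ, where Δ = max_{x∈X*} Δ_x, ξ = P₀(X*), and X* is the support of P*'s marginal on X. -/
/-!
At a point `x` where the Bayes classifier of the mixture misses `y*`, optimality against `y*`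
forces `α P*(x) ≤ (1 - α) (P₀(x, f x) - P₀(x, y*)) ≤ (1 - α) Δ_x P₀(x)`. Hence every point
contributes at least `P*(x) - ((1 - α) / α) Δ_x P₀(x)` to the success probability (the bound
`1{1 - t > 0} ≥ 1 - t`), and summing gives the first inequality. The second one bounds `Δ_x` by
its maximum `Δ` over `X*`, which carries all of the expectation under `P*`.
-/

open Finset

section

variable {X Y : Type*} [Fintype Y] [Nonempty Y]

/-- The gap `Δ_x` for the unnormalized conditional `p = P₀(x, ·)`. -/
noncomputable def labelGap (p : Y → ℝ) (y₀ : Y) : ℝ :=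
  univ.sup' univ_nonempty fun y => p y / (∑ y', p y') - p y₀ / (∑ y', p y')

lemma div_sum_sub_div_sum_le_labelGap (p : Y → ℝ) (y₀ y : Y) :
    p y / (∑ y', p y') - p y₀ / (∑ y', p y') ≤ labelGap p y₀ :=
  le_sup' (fun y => p y / (∑ y', p y') - p y₀ / (∑ y', p y')) (mem_univ y)

lemma labelGap_nonneg (p : Y → ℝ) (y₀ : Y) : 0 ≤ labelGap p y₀ := by
  simpa only [sub_self] using div_sum_sub_div_sum_le_labelGap p y₀ y₀

lemma sub_le_labelGap_mul_sum {p : Y → ℝ} (hp : ∀ y, 0 ≤ p y) (y₀ y : Y) :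
    p y - p y₀ ≤ labelGap p y₀ * ∑ y', p y' := by
  have hgap := div_sum_sub_div_sum_le_labelGap p y₀ y
  rcases (sum_nonneg fun y _ => hp y).eq_or_lt with hzero | hpos
  · have hp0 : ∀ y, p y = 0 := fun y =>
      (sum_eq_zero_iff_of_nonneg fun y _ => hp y).mp hzero.symm y (mem_univ y)
    simp [hp0]
  · rwa [div_sub_div_same, div_le_iff₀ hpos] at hgap

lemma mul_sum_le_of_optimal_ne {q p : Y → ℝ} {α : ℝ} {y₀ ŷ : Y} (hα1 : α ≤ 1)
    (hq : ∀ y, y ≠ y₀ → q y = 0) (hp : ∀ y, 0 ≤ p y)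
    (hopt : ∀ y, α * q y + (1 - α) * p y ≤ α * q ŷ + (1 - α) * p ŷ) (hŷ : ŷ ≠ y₀) :
    α * ∑ y, q y ≤ (1 - α) * (labelGap p y₀ * ∑ y, p y) := by
  have hy₀ := hopt y₀
  rw [hq ŷ hŷ] at hy₀
  calc α * ∑ y, q y = α * q y₀ := by rw [Fintype.sum_eq_single y₀ hq]
    _ ≤ (1 - α) * (p ŷ - p y₀) := by linarith
    _ ≤ (1 - α) * (labelGap p y₀ * ∑ y, p y) :=
      mul_le_mul_of_nonneg_left (sub_le_labelGap_mul_sum hp y₀ ŷ) (by linarith)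

/-- Pointwise form of `1{1 - t > 0} ≥ 1 - t`, with `t = ((1 - α) / α) r / q`. -/
lemma sub_mul_mul_div_le_mul_ite {q r α : ℝ} {s : Prop} [Decidable s] (hα : 0 < α)
    (hα1 : α ≤ 1) (hr : 0 ≤ r) (hfail : ¬s → α * q ≤ (1 - α) * r) :
    q - (1 - α) / α * (q * (r / q)) ≤ q * (if s then 1 else 0) := by
  rcases eq_or_ne q 0 with rfl | hq
  · simp
  rw [mul_div_cancel₀ r hq]
  split_ifs with hs
  · have : 0 ≤ (1 - α) / α * r := mul_nonneg (div_nonneg (by linarith) hα.le) hr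
    linarith
  · rw [mul_zero, sub_nonpos, div_mul_eq_mul_div, le_div_iff₀ hα, mul_comm]
    exact hfail hs

lemma sum_mul_le_sup'_mul_sum {S : Finset X} (hS : S.Nonempty) (g m : X → ℝ)
    (hm : ∀ x ∈ S, 0 ≤ m x) : ∑ x ∈ S, g x * m x ≤ S.sup' hS g * ∑ x ∈ S, m x := by
  rw [mul_sum]
  exact sum_le_sum fun x hx => mul_le_mul_of_nonneg_right (le_sup' g hx) (hm x hx)

variable [Fintype X]

lemma one_sub_mul_sum_le_sum_mul_ite {Q r : X → ℝ} {α : ℝ} {s : X → Prop} [DecidablePred s]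
    (hα : 0 < α) (hα1 : α ≤ 1) (hQ : ∑ x, Q x = 1) (hr : ∀ x, 0 ≤ r x)
    (hfail : ∀ x, ¬s x → α * Q x ≤ (1 - α) * r x) :
    1 - (1 - α) / α * ∑ x, Q x * (r x / Q x) ≤ ∑ x, Q x * (if s x then 1 else 0) := by
  calc 1 - (1 - α) / α * ∑ x, Q x * (r x / Q x)
      = ∑ x, (Q x - (1 - α) / α * (Q x * (r x / Q x))) := by rw [sum_sub_distrib, hQ, mul_sum]
    _ ≤ ∑ x, Q x * (if s x then 1 else 0) :=
      sum_le_sum fun x _ => sub_mul_mul_div_le_mul_ite hα hα1 (hr x) (hfail x)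

lemma sum_mul_div_self_le {Q r : X → ℝ} {S : Finset X} (hsupp : ∀ x, Q x ≠ 0 → x ∈ S)
    (hr : ∀ x, 0 ≤ r x) : ∑ x, Q x * (r x / Q x) ≤ ∑ x ∈ S, r x := by
  rw [← sum_subset (subset_univ S) fun x _ hx => by
    rw [not_imp_comm.mp (hsupp x) hx, zero_mul]]
  refine sum_le_sum fun x _ => ?_
  rcases eq_or_ne (Q x) 0 with hQ | hQ
  · simpa [hQ] using hr x
  · rw [mul_div_cancel₀ _ hQ]

end

theorem stmt8_general {X Y : Type*} [Fintype X] [Fintype Y] [DecidableEq Y]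
    [Nonempty Y]
    (P0 Pstar : X × Y → ℝ) (α : ℝ) (ystar : Y) (f : X → Y)
    (Xstar : Finset X) (hXne : Xstar.Nonempty)
    (hP0 : ∀ z, 0 ≤ P0 z)
    (hPstarsum : ∑ z, Pstar z = 1)
    (hα : 0 < α) (hα1 : α < 1)
    (hdet : ∀ x y, y ≠ ystar → Pstar (x, y) = 0)
    -- Xstar is the support of the X-marginal of P*:
    (hsupp : ∀ x, x ∈ Xstar ↔ (∑ y, Pstar (x, y)) ≠ 0)
    -- f is Bayes optimal on P_α = α P* + (1-α) P₀:
    (hBayes : ∀ x y, α * Pstar (x, y) + (1 - α) * P0 (x, y)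
        ≤ α * Pstar (x, f x) + (1 - α) * P0 (x, f x))
    -- the pointwise sub-optimality gap:
    (Δx : X → ℝ)
    (hΔx : ∀ x, Δx x = Finset.univ.sup' Finset.univ_nonempty (fun y : Y =>
        P0 (x, y) / (∑ y', P0 (x, y')) - P0 (x, ystar) / (∑ y', P0 (x, y')))) :
    (∑ x, (∑ y, Pstar (x, y)) * (if f x = ystar then 1 else 0))
        ≥ 1 - ((1 - α) / α) *
            (∑ x, (∑ y, Pstar (x, y)) * (Δx x * (∑ y, P0 (x, y)) / (∑ y, Pstar (x, y)))) ∧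
    1 - ((1 - α) / α) *
        (∑ x, (∑ y, Pstar (x, y)) * (Δx x * (∑ y, P0 (x, y)) / (∑ y, Pstar (x, y))))
      ≥ 1 - ((1 - α) / α) * (Xstar.sup' hXne Δx) * (∑ x ∈ Xstar, ∑ y, P0 (x, y)) := by
  have hgap : ∀ x, Δx x = labelGap (fun y => P0 (x, y)) ystar := hΔx
  have hmass : ∀ x, 0 ≤ Δx x * ∑ y, P0 (x, y) := fun x =>
    mul_nonneg (hgap x ▸ labelGap_nonneg _ _) (sum_nonneg fun y _ => hP0 _)
  refine ⟨one_sub_mul_sum_le_sum_mul_ite hα hα1.le ?_ hmass fun x hx => ?_, ?_⟩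
  · rw [← hPstarsum, Fintype.sum_prod_type]
  · rw [hgap]
    exact mul_sum_le_of_optimal_ne hα1.le (hdet x) (fun y => hP0 _) (hBayes x) hx
  · have hsum := (sum_mul_div_self_le (fun x => (hsupp x).mpr) hmass).trans
      (sum_mul_le_sup'_mul_sum hXne Δx _ fun x _ => sum_nonneg fun y _ => hP0 (x, y))
    rw [ge_iff_le, sub_le_sub_iff_left, mul_assoc]
    exact mul_le_mul_of_nonneg_left hsum (div_nonneg (by linarith) hα.le)

/-- success lower bound for a Bayes optimal classifier on the mixture:
`S(α) ≥ 1 - ((1-α)/α) E_{x∼P*}[Δ_x P₀(x)/P*(x)] ≥ 1 - ((1-α)/α) Δ ξ`. -/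
theorem stmt8 {X Y : Type*} [Fintype X] [Fintype Y] [DecidableEq X] [DecidableEq Y]
    [Nonempty Y]
    (P0 Pstar : X × Y → ℝ) (α : ℝ) (ystar : Y) (f : X → Y)
    (Xstar : Finset X) (hXne : Xstar.Nonempty)
    (hP0 : ∀ z, 0 ≤ P0 z) (hP0sum : ∑ z, P0 z = 1)
    (hPstar : ∀ z, 0 ≤ Pstar z) (hPstarsum : ∑ z, Pstar z = 1)
    (hα : 0 < α) (hα1 : α < 1)
    (hdet : ∀ x y, y ≠ ystar → Pstar (x, y) = 0)
    -- Xstar is the support of the X-marginal of P*: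
    (hsupp : ∀ x, x ∈ Xstar ↔ (∑ y, Pstar (x, y)) ≠ 0)
    -- f is Bayes optimal on P_α = α P* + (1-α) P₀:
    (hBayes : ∀ x y, α * Pstar (x, y) + (1 - α) * P0 (x, y)
        ≤ α * Pstar (x, f x) + (1 - α) * P0 (x, f x))
    -- the pointwise sub-optimality gap:
    (Δx : X → ℝ)
    (hΔx : ∀ x, Δx x = Finset.univ.sup' Finset.univ_nonempty (fun y : Y =>
        P0 (x, y) / (∑ y', P0 (x, y')) - P0 (x, ystar) / (∑ y', P0 (x, y')))) :
    (∑ x, (∑ y, Pstar (x, y)) * (if f x = ystar then 1 else 0))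
        ≥ 1 - ((1 - α) / α) *
            (∑ x, (∑ y, Pstar (x, y)) * (Δx x * (∑ y, P0 (x, y)) / (∑ y, Pstar (x, y)))) ∧
    1 - ((1 - α) / α) *
        (∑ x, (∑ y, Pstar (x, y)) * (Δx x * (∑ y, P0 (x, y)) / (∑ y, Pstar (x, y))))
      ≥ 1 - ((1 - α) / α) * (Xstar.sup' hXne Δx) * (∑ x ∈ Xstar, ∑ y, P0 (x, y)) :=
  stmt8_general P0 Pstar α ystar f Xstar hXne hP0 hPstarsum hα hα1 hdet hsupp hBayes Δx hΔx
end

section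
/- (Weighted success bound with corrective term) Let w: X×Y→ℝ₊ and suppose a classifier f is Bayes optimal on the weighted mixture P_α^(w). Then the success satisfies S(α) ≥ 1 − ((1−α_eff)/α_eff) · E_{x∼P*}[Δ_x^w · P₀^(w)(x) / (P*)^(w)(x)] = 1 − ((1−α_eff)/α_eff)·(E_{x∼P*}[Δ_x·P₀(x)/P*(x)] + c), where α_eff is the effective collective size, Δ_x^w = max_y(P₀^(w)(y|x) − P₀^(w)(y*|x)), and c = E_{x∼P*}[Δ_x^w P₀^(w)(x)/(P*)^(w)(x) − Δ_x P₀(x)/P*(x)]. -/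
/-!
Reweighting by `w` keeps the mixture structure: `P_α^(w) = α_eff (P*)^(w) + (1 - α_eff) P₀^(w)`.
At a point `x` that `f` misclassifies, Bayes optimality on this mixture compares the scores of
`y*` and `f x`; since `(P*)^(w)` charges only `y*`, this gives
`α_eff (P*)^(w)(x) ≤ (1 - α_eff) Δ_x^w P₀^(w)(x)`, i.e. the ratio in the bound is at least `1`
wherever `f` errs. Summing against `P*` bounds the error mass.
-/

open Finset

/-- The `w`-weighted version of a distribution `Q`: `Q^(w)(z) = w(z) Q(z) / E_Q[w]`. -/
noncomputable def wdist {Z : Type*} [Fintype Z] (Q w : Z → ℝ) : Z → ℝ :=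
  fun z => w z * Q z / (∑ z', w z' * Q z')

section Weighting

variable {Z : Type*} [Fintype Z]

/-- The effective collective size `α_eff = α E_{P*}[w] / E_{P_α}[w]`. -/
noncomputable def effectiveWeight (P Q w : Z → ℝ) (a : ℝ) : ℝ :=
  a * (∑ z, w z * P z) / ∑ z, w z * (a * P z + (1 - a) * Q z)

lemma wdist_nonneg {P w : Z → ℝ} (hP : ∀ z, 0 ≤ P z) (hw : ∀ z, 0 ≤ w z) (z : Z) :
    0 ≤ wdist P w z :=
  div_nonneg (mul_nonneg (hw z) (hP z)) (sum_nonneg fun z _ => mul_nonneg (hw z) (hP z))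

lemma wdist_eq_zero {P : Z → ℝ} (w : Z → ℝ) {z : Z} (hz : P z = 0) : wdist P w z = 0 := by
  simp [wdist, hz]

lemma sum_mul_pos_of_sum_eq_one {P w : Z → ℝ} (hP : ∀ z, 0 ≤ P z) (hP1 : ∑ z, P z = 1)
    (hw : ∀ z, 0 < w z) : 0 < ∑ z, w z * P z := by
  obtain ⟨z, -, hz⟩ : ∃ z ∈ univ, (0 : ℝ) < P z :=
    exists_lt_of_sum_lt (by simp [hP1] : ∑ _z : Z, (0 : ℝ) < ∑ z, P z)
  exact sum_pos' (fun z _ => mul_nonneg (hw z).le (hP z)) ⟨z, mem_univ z, mul_pos (hw z) hz⟩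

lemma sum_mul_mix (P Q w : Z → ℝ) (a : ℝ) :
    ∑ z, w z * (a * P z + (1 - a) * Q z) = a * ∑ z, w z * P z + (1 - a) * ∑ z, w z * Q z := by
  simp only [mul_sum, ← sum_add_distrib]
  exact sum_congr rfl fun z _ => by ring

lemma effectiveWeight_mem_Ioo {P Q w : Z → ℝ} {a : ℝ} (ha : a ∈ Set.Ioo 0 1)
    (hP : 0 < ∑ z, w z * P z) (hQ : 0 < ∑ z, w z * Q z) :
    effectiveWeight P Q w a ∈ Set.Ioo 0 1 := by
  obtain ⟨ha0, ha1⟩ := ha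
  have hQa : 0 < (1 - a) * ∑ z, w z * Q z := mul_pos (by linarith) hQ
  rw [effectiveWeight, sum_mul_mix]
  exact ⟨by positivity, (div_lt_one (by positivity)).2 (by linarith)⟩

lemma wdist_mix {P Q w : Z → ℝ} {a : ℝ} (hP : ∑ z, w z * P z ≠ 0) (hQ : ∑ z, w z * Q z ≠ 0)
    (hPQ : ∑ z, w z * (a * P z + (1 - a) * Q z) ≠ 0) (z : Z) :
    wdist (fun z => a * P z + (1 - a) * Q z) w z
      = effectiveWeight P Q w a * wdist P w z + (1 - effectiveWeight P Q w a) * wdist Q w z := by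
  rw [sum_mul_mix] at hPQ
  simp only [wdist, effectiveWeight, sum_mul_mix]
  field_simp
  ring

lemma wdist_marginal_pos {X Y : Type*} [Fintype X] [Fintype Y] {P w : X × Y → ℝ}
    (hP : ∀ z, 0 ≤ P z) (hw : ∀ z, 0 < w z) {x : X} (hx : 0 < ∑ y, P (x, y)) :
    0 < ∑ y, wdist P w (x, y) := by
  obtain ⟨y, -, hy⟩ : ∃ y ∈ univ, (0 : ℝ) < P (x, y) :=
    exists_lt_of_sum_lt (by simpa using hx)
  have hwP : 0 < w (x, y) * P (x, y) := mul_pos (hw _) hy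
  have hE : 0 < ∑ z, w z * P z :=
    hwP.trans_le (single_le_sum (fun z _ => mul_nonneg (hw z).le (hP z)) (mem_univ (x, y)))
  exact sum_pos' (fun y _ => wdist_nonneg hP (fun z => (hw z).le) _)
    ⟨y, mem_univ y, div_pos hwP hE⟩

end Weighting

section BayesOptimal

variable {Y : Type*} [Fintype Y] [Nonempty Y]

/-- The gap `max_y (q(y|·) - q(y₀|·))` of the conditional distribution of an unnormalised `q`. -/
noncomputable def condGap (q : Y → ℝ) (y₀ : Y) : ℝ :=
  univ.sup' univ_nonempty fun y => q y / ∑ y', q y' - q y₀ / ∑ y', q y'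

lemma condGap_nonneg (q : Y → ℝ) (y₀ : Y) : 0 ≤ condGap q y₀ := by
  have h := le_sup' (fun y => q y / ∑ y', q y' - q y₀ / ∑ y', q y') (mem_univ y₀)
  rwa [sub_self] at h

lemma sub_le_condGap_mul_sum {q : Y → ℝ} (hq : ∀ y, 0 ≤ q y) (y₀ y : Y) :
    q y - q y₀ ≤ condGap q y₀ * ∑ y', q y' := by
  rcases (sum_nonneg fun y _ => hq y : 0 ≤ ∑ y', q y').eq_or_lt with hs | hs
  · have hzero := (Fintype.sum_eq_zero_iff_of_nonneg hq).1 hs.symm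
    simp [congrFun hzero y, congrFun hzero y₀, ← hs]
  · have hle := le_sup' (fun y => q y / ∑ y', q y' - q y₀ / ∑ y', q y') (mem_univ y)
    rw [← sub_div, div_le_iff₀ hs] at hle
    exact hle

lemma mul_sum_le_condGap_of_optimal {p q : Y → ℝ} {β : ℝ} {y₀ y₁ : Y} (hβ : β ≤ 1)
    (hq : ∀ y, 0 ≤ q y) (hp : ∀ y, y ≠ y₀ → p y = 0) (hy₁ : y₁ ≠ y₀)
    (hopt : β * p y₀ + (1 - β) * q y₀ ≤ β * p y₁ + (1 - β) * q y₁) :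
    β * ∑ y, p y ≤ (1 - β) * (condGap q y₀ * ∑ y, q y) := by
  rw [Fintype.sum_eq_single y₀ hp]
  rw [hp y₁ hy₁] at hopt
  have hgap := mul_le_mul_of_nonneg_left (sub_le_condGap_mul_sum hq y₀ y₁) (sub_nonneg.2 hβ)
  linarith

end BayesOptimal

lemma sum_mul_ite_ge {X Y : Type*} [Fintype X] [DecidableEq Y] {ν B : X → ℝ} {f : X → Y}
    {y₀ : Y} (hν : ∑ x, ν x = 1) (hB : ∀ x, 0 ≤ B x) (hmis : ∀ x, f x ≠ y₀ → ν x ≤ B x) :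
    1 - ∑ x, B x ≤ ∑ x, ν x * if f x = y₀ then 1 else 0 := by
  have hterm : ∀ x, ν x - B x ≤ ν x * if f x = y₀ then 1 else 0 := fun x => by
    by_cases hx : f x = y₀
    · simp [hx, hB x]
    · simp [hx, hmis x hx]
  have hsum := sum_le_sum fun x (_ : x ∈ univ) => hterm x
  rwa [sum_sub_distrib, hν] at hsum

lemma le_odds_mul_mul_div_of_mul_le {β a b m : ℝ} (hβ : 0 < β) (hb : 0 < b) (hm : 0 ≤ m)
    (h : β * b ≤ (1 - β) * a) : m ≤ (1 - β) / β * (m * (a / b)) := by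
  have hone : 1 ≤ (1 - β) / β * (a / b) := by
    rw [div_mul_div_comm, one_le_div (mul_pos hβ hb)]
    linarith
  calc m = m * 1 := (mul_one m).symm
    _ ≤ m * ((1 - β) / β * (a / b)) := mul_le_mul_of_nonneg_left hone hm
    _ = (1 - β) / β * (m * (a / b)) := by ring

theorem stmt9_general {X Y : Type*} [Fintype X] [Fintype Y] [DecidableEq Y] [Nonempty Y]
    (P0 Pstar : X × Y → ℝ) (w : X × Y → ℝ) (α αeff c : ℝ) (ystar : Y) (f : X → Y)
    (hP0 : ∀ z, 0 ≤ P0 z) (hP0sum : ∑ z, P0 z = 1)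
    (hPstar : ∀ z, 0 ≤ Pstar z) (hPstarsum : ∑ z, Pstar z = 1)
    (hw : ∀ z, 0 < w z) (hα : 0 < α) (hα1 : α < 1)
    (hdet : ∀ x y, y ≠ ystar → Pstar (x, y) = 0)
    -- effective collective size α_eff = α E_{P*}[w] / E_{P_α}[w]:
    (hαeff : αeff = α * (∑ z, w z * Pstar z)
        / (∑ z, w z * (α * Pstar z + (1 - α) * P0 z)))
    -- f is Bayes optimal on the weighted mixture (P_α)^(w):
    (hBayes : ∀ x y, wdist (fun z => α * Pstar z + (1 - α) * P0 z) w (x, y)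
        ≤ wdist (fun z => α * Pstar z + (1 - α) * P0 z) w (x, f x))
    -- pointwise sub-optimality gaps, unweighted and weighted:
    (Δx Δxw : X → ℝ)
    (hΔxw : ∀ x, Δxw x = Finset.univ.sup' Finset.univ_nonempty (fun y : Y =>
        wdist P0 w (x, y) / (∑ y', wdist P0 w (x, y'))
          - wdist P0 w (x, ystar) / (∑ y', wdist P0 w (x, y'))))
    -- corrective term:
    (hc : c = ∑ x, (∑ y, Pstar (x, y)) *
        (Δxw x * (∑ y, wdist P0 w (x, y)) / (∑ y, wdist Pstar w (x, y))
          - Δx x * (∑ y, P0 (x, y)) / (∑ y, Pstar (x, y)))) :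
    (∑ x, (∑ y, Pstar (x, y)) * (if f x = ystar then 1 else 0))
        ≥ 1 - ((1 - αeff) / αeff) *
            (∑ x, (∑ y, Pstar (x, y)) *
              (Δxw x * (∑ y, wdist P0 w (x, y)) / (∑ y, wdist Pstar w (x, y)))) ∧
    (∑ x, (∑ y, Pstar (x, y)) *
        (Δxw x * (∑ y, wdist P0 w (x, y)) / (∑ y, wdist Pstar w (x, y))))
      = (∑ x, (∑ y, Pstar (x, y)) *
          (Δx x * (∑ y, P0 (x, y)) / (∑ y, Pstar (x, y)))) + c := by
  have hE0 := sum_mul_pos_of_sum_eq_one hP0 hP0sum hw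
  have hEs := sum_mul_pos_of_sum_eq_one hPstar hPstarsum hw
  have hEmix : 0 < ∑ z, w z * (α * Pstar z + (1 - α) * P0 z) := by
    rw [sum_mul_mix]; nlinarith
  obtain ⟨hβ0, hβ1⟩ : αeff ∈ Set.Ioo 0 1 := hαeff ▸ effectiveWeight_mem_Ioo ⟨hα, hα1⟩ hEs hE0
  have hwP0 := wdist_nonneg hP0 fun z => (hw z).le
  have hwPs := wdist_nonneg hPstar fun z => (hw z).le
  have hmis : ∀ x, f x ≠ ystar → αeff * ∑ y, wdist Pstar w (x, y)
      ≤ (1 - αeff) * (Δxw x * ∑ y, wdist P0 w (x, y)) := fun x hx => by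
    have hopt := hBayes x ystar
    have hαeff' : effectiveWeight Pstar P0 w α = αeff := hαeff.symm
    rw [wdist_mix hEs.ne' hE0.ne' hEmix.ne', wdist_mix hEs.ne' hE0.ne' hEmix.ne', hαeff'] at hopt
    rw [hΔxw x]
    exact mul_sum_le_condGap_of_optimal hβ1.le (fun y => hwP0 _)
      (fun y hy => wdist_eq_zero w (hdet x y hy)) hx hopt
  refine ⟨?_, by rw [hc, ← sum_add_distrib]; exact sum_congr rfl fun x _ => by ring⟩
  rw [ge_iff_le, mul_sum]
  refine sum_mul_ite_ge (by rw [← hPstarsum, Fintype.sum_prod_type]) (fun x => ?_) fun x hx => ?_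
  · exact mul_nonneg (div_nonneg (sub_nonneg.2 hβ1.le) hβ0.le)
      (mul_nonneg (sum_nonneg fun y _ => hPstar _) (div_nonneg
        (mul_nonneg (hΔxw x ▸ condGap_nonneg _ _) (sum_nonneg fun y _ => hwP0 _))
        (sum_nonneg fun y _ => hwPs _)))
  · rcases (sum_nonneg fun y _ => hPstar (x, y) : 0 ≤ ∑ y, Pstar (x, y)).eq_or_lt with h0 | hpos
    · simp [← h0]
    · exact le_odds_mul_mul_div_of_mul_le hβ0 (wdist_marginal_pos hPstar hw hpos) hpos.le
        (hmis x hx)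

/-- Weighted success bound with corrective term. -/
theorem stmt9 {X Y : Type*} [Fintype X] [Fintype Y] [DecidableEq Y] [Nonempty Y]
    (P0 Pstar : X × Y → ℝ) (w : X × Y → ℝ) (α αeff c : ℝ) (ystar : Y) (f : X → Y)
    (hP0 : ∀ z, 0 ≤ P0 z) (hP0sum : ∑ z, P0 z = 1)
    (hPstar : ∀ z, 0 ≤ Pstar z) (hPstarsum : ∑ z, Pstar z = 1)
    (hw : ∀ z, 0 < w z) (hα : 0 < α) (hα1 : α < 1)
    (hdet : ∀ x y, y ≠ ystar → Pstar (x, y) = 0)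
    -- effective collective size α_eff = α E_{P*}[w] / E_{P_α}[w]:
    (hαeff : αeff = α * (∑ z, w z * Pstar z)
        / (∑ z, w z * (α * Pstar z + (1 - α) * P0 z)))
    -- f is Bayes optimal on the weighted mixture (P_α)^(w):
    (hBayes : ∀ x y, wdist (fun z => α * Pstar z + (1 - α) * P0 z) w (x, y)
        ≤ wdist (fun z => α * Pstar z + (1 - α) * P0 z) w (x, f x))
    -- pointwise sub-optimality gaps, unweighted and weighted:
    (Δx Δxw : X → ℝ)
    (hΔx : ∀ x, Δx x = Finset.univ.sup' Finset.univ_nonempty (fun y : Y =>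
        P0 (x, y) / (∑ y', P0 (x, y')) - P0 (x, ystar) / (∑ y', P0 (x, y'))))
    (hΔxw : ∀ x, Δxw x = Finset.univ.sup' Finset.univ_nonempty (fun y : Y =>
        wdist P0 w (x, y) / (∑ y', wdist P0 w (x, y'))
          - wdist P0 w (x, ystar) / (∑ y', wdist P0 w (x, y'))))
    -- corrective term:
    (hc : c = ∑ x, (∑ y, Pstar (x, y)) *
        (Δxw x * (∑ y, wdist P0 w (x, y)) / (∑ y, wdist Pstar w (x, y))
          - Δx x * (∑ y, P0 (x, y)) / (∑ y, Pstar (x, y)))) :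
    (∑ x, (∑ y, Pstar (x, y)) * (if f x = ystar then 1 else 0))
        ≥ 1 - ((1 - αeff) / αeff) *
            (∑ x, (∑ y, Pstar (x, y)) *
              (Δxw x * (∑ y, wdist P0 w (x, y)) / (∑ y, wdist Pstar w (x, y)))) ∧
    (∑ x, (∑ y, Pstar (x, y)) *
        (Δxw x * (∑ y, wdist P0 w (x, y)) / (∑ y, wdist Pstar w (x, y))))
      = (∑ x, (∑ y, Pstar (x, y)) *
          (Δx x * (∑ y, P0 (x, y)) / (∑ y, Pstar (x, y)))) + c :=
  stmt9_general P0 Pstar w α αeff c ystar f hP0 hP0sum hPstar hPstarsum hw hα hα1 hdet hαeff hBayes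
    Δx Δxw hΔxw hc
end

section
/- For the mixture P_V(Y=y|X=x) induced by P_V = βP* + (1−β)P₀ with β > α, if classifier f maximizes validation accuracy Pr_{P_V}[f(X)=Y] over a finite family F containing the Bayes optimal classifier f_P on the training mixture P = αP* + (1−α)P₀, then S_f ≥ S_{f_P}, i.e., the validation-selected classifier has collective success at least that of the training-Bayes classifier, provided Pr_{P_V}[f(X)=Y] ≥ Pr_{P_V}[f_P(X)=Y]. -/
open Finset

/-- Accuracy of a classifier `g` under a distribution `q` on `X × Y`: `Pr_q[g(X) = Y]`. -/
noncomputable def acc {X Y : Type*} [Fintype X] [Fintype Y] [DecidableEq Y]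
    (q : X × Y → ℝ) (g : X → Y) : ℝ :=
  ∑ z, if g z.1 = z.2 then q z else 0


lemma acc_key {X Y : Type*} [Fintype X] [Fintype Y] [DecidableEq Y]
    (q r : X × Y → ℝ) (a b : ℝ) (g : X → Y) :
    acc (fun z => a * q z + b * r z) g = a * acc q g + b * acc r g := by
  simp only [acc, Finset.mul_sum, ← Finset.sum_add_distrib]
  refine Finset.sum_congr rfl fun z _ => by split <;> simp

/-- if `f` maximizes validation accuracy on `P_V = β P* + (1-β) P₀` over a
finite family `F` containing the Bayes optimal classifier `fP` on the training mixture
`P = α P* + (1-α) P₀`, and `β > α`, then the collective success of `f` is at least that of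
`fP`. -/
theorem stmt16 {X Y : Type*} [Fintype X] [Fintype Y] [DecidableEq X] [DecidableEq Y]
    (P0 Pstar P PV : X × Y → ℝ) (α β : ℝ) (F : Finset (X → Y)) (f fP : X → Y)
    (hP0 : ∀ z, 0 ≤ P0 z) (hP0sum : ∑ z, P0 z = 1)
    (hPstar : ∀ z, 0 ≤ Pstar z) (hPstarsum : ∑ z, Pstar z = 1)
    (hα : 0 < α) (hα1 : α < 1) (hαβ : α < β) (hβ : β ≤ 1)
    (hP : ∀ z, P z = α * Pstar z + (1 - α) * P0 z)
    (hPV : ∀ z, PV z = β * Pstar z + (1 - β) * P0 z)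
    (hfF : f ∈ F) (hfPF : fP ∈ F)
    -- fP is Bayes optimal on the training mixture P:
    (hBayes : ∀ g : X → Y, acc P g ≤ acc P fP)
    -- f maximizes validation accuracy over F:
    (hmax : ∀ g ∈ F, acc PV g ≤ acc PV f) :
    acc Pstar f ≥ acc Pstar fP := by
  have key : ∀ g : X → Y, (1 - α) * acc PV g = (β - α) * acc Pstar g + (1 - β) * acc P g := by
    intro g
    have h1 : (fun z => (1 - α) * PV z) = fun z => (β - α) * Pstar z + (1 - β) * P z := by
      funext z; rw [hPV z, hP z]; ring
    have h2 := acc_key Pstar P (β - α) (1 - β) g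
    rw [← h1] at h2
    have h3 : acc (fun z => (1 - α) * PV z) g = (1 - α) * acc PV g := by
      simpa using acc_key PV PV (1 - α) 0 g
    linarith [h3 ▸ h2]
  have hVf := hmax fP hfPF
  have hPf := hBayes f
  have k1 := key f
  have k2 := key fP
  nlinarith [k1, k2, hVf, hPf]
end
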